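/- For every n ≥ 1, every ε > 0 and every K ≥ 0, there exists a diagonal matrix Q with strictly positive diagonal entries such that εQ − K·LᵀQL is positive definite, where L is the n×n strictly lower triangular matrix of all ones. -/

import Mathlib

/-!
Take geometric weights `Q = diag (t ^ i)` with `0 < t ≤ 1`. Since `L` is strictly lower
triangular, `(L x)_i` only involves the `x_j` with `j < i`, whose weights satisfy
`t ^ i ≤ t * t ^ j`; Cauchy–Schwarz on each row then gives
`(L x)ᵀ Q (L x) ≤ t ‖L‖_F² xᵀ Q x`. Choosing `t` with `K t ‖L‖_F² < ε` makes
`ε Q - K Lᵀ Q L` positive definite.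
-/

open Matrix

namespace Matrix

theorem dotProduct_diagonal_mulVec_self {ι R : Type*} [Fintype ι] [DecidableEq ι]
    [CommSemiring R] (q x : ι → R) : x ⬝ᵥ (diagonal q *ᵥ x) = ∑ i, q i * x i ^ 2 := by
  simp only [dotProduct, mulVec_diagonal]
  exact Finset.sum_congr rfl fun i _ => by ring

theorem dotProduct_transpose_mul_mul_mulVec_self {ι κ R : Type*} [Fintype ι] [Fintype κ]
    [CommSemiring R] (A : Matrix ι ι R) (L : Matrix ι κ R) (x : κ → R) :
    x ⬝ᵥ ((Lᵀ * A * L) *ᵥ x) = (L *ᵥ x) ⬝ᵥ (A *ᵥ (L *ᵥ x)) := by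
  rw [← mulVec_mulVec, ← mulVec_mulVec, dotProduct_mulVec, vecMul_transpose]

variable {n : ℕ}

theorem pow_mul_mulVec_sq_le_of_strictLower {t : ℝ} (ht0 : 0 ≤ t) (ht1 : t ≤ 1)
    {L : Matrix (Fin n) (Fin n) ℝ} (hL : ∀ i j, i ≤ j → L i j = 0) (x : Fin n → ℝ)
    (i : Fin n) :
    t ^ (i : ℕ) * (L *ᵥ x) i ^ 2 ≤
      t * (∑ j, L i j ^ 2) * ∑ j : Fin n, t ^ (j : ℕ) * x j ^ 2 := by
  set xᵢ : Fin n → ℝ := fun j => if j < i then x j else 0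
  have hrow : (L *ᵥ x) i = ∑ j, L i j * xᵢ j := by
    simp only [mulVec, dotProduct]
    refine Finset.sum_congr rfl fun j _ => ?_
    by_cases hj : j < i
    · simp [xᵢ, hj]
    · simp [xᵢ, hj, hL i j (not_lt.mp hj)]
  have hweight :
      t ^ (i : ℕ) * ∑ j, xᵢ j ^ 2 ≤ t * ∑ j : Fin n, t ^ (j : ℕ) * x j ^ 2 := by
    rw [Finset.mul_sum, Finset.mul_sum]
    refine Finset.sum_le_sum fun j _ => ?_
    by_cases hj : j < i
    · have : t ^ (i : ℕ) ≤ t * t ^ (j : ℕ) := by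
        rw [← pow_succ']; exact pow_le_pow_of_le_one ht0 ht1 hj
      simp only [xᵢ, if_pos hj, ← mul_assoc]
      exact mul_le_mul_of_nonneg_right this (sq_nonneg _)
    · simp only [xᵢ, if_neg hj, zero_pow two_ne_zero, mul_zero]; positivity
  calc t ^ (i : ℕ) * (L *ᵥ x) i ^ 2
      ≤ t ^ (i : ℕ) * ((∑ j, L i j ^ 2) * ∑ j, xᵢ j ^ 2) := by
        rw [hrow]; gcongr; exact Finset.sum_mul_sq_le_sq_mul_sq _ _ _
    _ = (∑ j, L i j ^ 2) * (t ^ (i : ℕ) * ∑ j, xᵢ j ^ 2) := by ring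
    _ ≤ (∑ j, L i j ^ 2) * (t * ∑ j : Fin n, t ^ (j : ℕ) * x j ^ 2) := by gcongr
    _ = t * (∑ j, L i j ^ 2) * ∑ j : Fin n, t ^ (j : ℕ) * x j ^ 2 := by ring

theorem sum_pow_mul_mulVec_sq_le_of_strictLower {t : ℝ} (ht0 : 0 ≤ t) (ht1 : t ≤ 1)
    {L : Matrix (Fin n) (Fin n) ℝ} (hL : ∀ i j, i ≤ j → L i j = 0) (x : Fin n → ℝ) :
    ∑ i : Fin n, t ^ (i : ℕ) * (L *ᵥ x) i ^ 2 ≤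
      t * (∑ i, ∑ j, L i j ^ 2) * ∑ j : Fin n, t ^ (j : ℕ) * x j ^ 2 := by
  calc ∑ i : Fin n, t ^ (i : ℕ) * (L *ᵥ x) i ^ 2
      ≤ ∑ i, t * (∑ j, L i j ^ 2) * ∑ j : Fin n, t ^ (j : ℕ) * x j ^ 2 :=
        Finset.sum_le_sum fun i _ => pow_mul_mulVec_sq_le_of_strictLower ht0 ht1 hL x i
    _ = t * (∑ i, ∑ j, L i j ^ 2) * ∑ j : Fin n, t ^ (j : ℕ) * x j ^ 2 := by
        rw [← Finset.sum_mul, ← Finset.mul_sum]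

theorem exists_pos_diagonal_posDef_sub_transpose_mul_mul {ε K : ℝ} (hε : 0 < ε) (hK : 0 ≤ K)
    {L : Matrix (Fin n) (Fin n) ℝ} (hL : ∀ i j, i ≤ j → L i j = 0) :
    ∃ q : Fin n → ℝ, (∀ i, 0 < q i) ∧
      (ε • diagonal q - K • (Lᵀ * diagonal q * L)).PosDef := by
  set S := ∑ i, ∑ j, L i j ^ 2
  have hS : 0 ≤ S := by positivity
  set t := ε / (ε + K * S)
  have ht0 : 0 < t := by positivity
  have ht1 : t ≤ 1 := div_le_one_of_le₀ (by nlinarith) (by positivity)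
  have hKSt : K * S * t < ε := by
    have ht_eq : t * (ε + K * S) = ε := div_mul_cancel₀ _ (by positivity)
    nlinarith [mul_pos hε ht0]
  refine ⟨fun i => t ^ (i : ℕ), fun i => pow_pos ht0 _,
    posDef_iff_dotProduct_mulVec.mpr ⟨?_, ?_⟩⟩
  · have hQ : (diagonal fun i : Fin n => t ^ (i : ℕ)).IsHermitian := isHermitian_diagonal _
    rw [← conjTranspose_eq_transpose_of_trivial]
    exact (hQ.smul (IsSelfAdjoint.all ε)).sub
      ((isHermitian_conjTranspose_mul_mul L hQ).smul (IsSelfAdjoint.all K))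
  · intro x hx
    have hQx : 0 < ∑ j : Fin n, t ^ (j : ℕ) * x j ^ 2 := by
      obtain ⟨i, hi⟩ := Function.ne_iff.mp hx
      exact Finset.sum_pos' (fun j _ => by positivity)
        ⟨i, Finset.mem_univ i, mul_pos (pow_pos ht0 _) (sq_pos_of_ne_zero hi)⟩
    have hLx := sum_pow_mul_mulVec_sq_le_of_strictLower ht0.le ht1 hL x
    rw [star_trivial, sub_mulVec, dotProduct_sub, smul_mulVec, smul_mulVec, dotProduct_smul,
      dotProduct_smul, dotProduct_transpose_mul_mul_mulVec_self, dotProduct_diagonal_mulVec_self,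
      dotProduct_diagonal_mulVec_self, smul_eq_mul, smul_eq_mul]
    nlinarith [mul_le_mul_of_nonneg_left hLx hK]

end Matrix

theorem exists_diagonal_weight_posdef_general (n : ℕ) (ε : ℝ) (hε : 0 < ε)
    (K : ℝ) (hK : 0 ≤ K)
    (L : Matrix (Fin n) (Fin n) ℝ) (hL : ∀ i j, L i j = if j < i then 1 else 0) :
    ∃ q : Fin n → ℝ, (∀ i, 0 < q i) ∧
      (ε • Matrix.diagonal q - K • (Lᵀ * Matrix.diagonal q * L)).PosDef :=
  exists_pos_diagonal_posDef_sub_transpose_mul_mul hε hK fun i j hij => by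
    simp [hL, not_lt.mpr hij]

theorem exists_diagonal_weight_posdef (n : ℕ) (hn : 1 ≤ n) (ε : ℝ) (hε : 0 < ε)
    (K : ℝ) (hK : 0 ≤ K)
    (L : Matrix (Fin n) (Fin n) ℝ) (hL : ∀ i j, L i j = if j < i then 1 else 0) :
    ∃ q : Fin n → ℝ, (∀ i, 0 < q i) ∧
      (ε • Matrix.diagonal q - K • (Lᵀ * Matrix.diagonal q * L)).PosDef :=
  exists_diagonal_weight_posdef_general n ε hε K hK L hL
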